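/- Let L be a Lie algebra over a field. The map γ_L : L^{ab} ⊗ L^{ab} ⊗ L^{ab} → (L²/L³) ⊗ L/L² defined by x̄ ⊗ ȳ ⊗ z̄ ↦ ([x,y]+L³) ⊗ (z+L²) + ([z,x]+L³) ⊗ (y+L²) + ([y,z]+L³) ⊗ (x+L²) is well defined and linear, and γ_L(x̄ ⊗ ȳ ⊗ z̄) = 0 whenever any two of the elements x, y, z of L are linearly dependent. -/

import Mathlib

/-!
The bracket induces an alternating bilinear map `β : L^{ab} × L^{ab} → L²/L³`: it kills `L²` in
either slot because `[L, L²] ⊆ L³`. For any bilinear `β`, the cyclic sum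
`a ⊗ b ⊗ c ↦ β a b ⊗ c + β c a ⊗ b + β b c ⊗ a` is trilinear and invariant under rotating
`(a, b, c)`. When `β` is alternating it vanishes for `a = b`, hence, being linear in `a` and `b`,
whenever `a, b` are dependent, and by rotation whenever any two arguments are dependent.
Dependence of `x, y` in `L` passes to their images in `L^{ab}`.
-/

open Module TensorProduct

lemma lie_mem_lowerCentral_one (K : Type) [Field K] {L : Type} [LieRing L]
    [LieAlgebra K L] (x y : L) : ⁅x, y⁆ ∈ LieModule.lowerCentralSeries K L L 1 := by
  rw [show (1 : ℕ) = 0 + 1 from rfl, LieModule.lowerCentralSeries_succ]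
  exact LieSubmodule.lie_mem_lie (LieSubmodule.mem_top x) (LieSubmodule.mem_top y)

/-- The derived subalgebra `L²` as a submodule. -/
noncomputable abbrev lieD2 (K : Type) [Field K] (L : Type) [LieRing L] [LieAlgebra K L] :
    Submodule K L :=
  ((LieModule.lowerCentralSeries K L L 1 : LieSubmodule K L L) : Submodule K L)

/-- `L³` as a submodule. -/
noncomputable abbrev lieD3 (K : Type) [Field K] (L : Type) [LieRing L] [LieAlgebra K L] :
    Submodule K L :=
  ((LieModule.lowerCentralSeries K L L 2 : LieSubmodule K L L) : Submodule K L)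

/-- The quotient `L²/L³`. -/
noncomputable abbrev lieQ23 (K : Type) [Field K] (L : Type) [LieRing L] [LieAlgebra K L] :
    Type :=
  ↥(lieD2 K L) ⧸ (Submodule.comap (lieD2 K L).subtype (lieD3 K L))

/-- The class of `⁅x,y⁆ + L³` in `L²/L³`. -/
noncomputable def lieBr23 (K : Type) [Field K] {L : Type} [LieRing L] [LieAlgebra K L]
    (x y : L) : lieQ23 K L :=
  Submodule.Quotient.mk ⟨⁅x, y⁆, lie_mem_lowerCentral_one K x y⟩

section CyclicTensor

variable {R V W X : Type*} [CommRing R] [AddCommGroup V] [Module R V] [AddCommGroup W]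
  [Module R W] [AddCommGroup X] [Module R X]

/-- `f.rotate₃ a b c = f b c a`. -/
def LinearMap.rotate₃ (f : V →ₗ[R] V →ₗ[R] V →ₗ[R] X) : V →ₗ[R] V →ₗ[R] V →ₗ[R] X :=
  (LinearMap.lflip.toLinearMap ∘ₗ f).flip

def cyclicTensor (β : V →ₗ[R] V →ₗ[R] W) : V →ₗ[R] V →ₗ[R] V →ₗ[R] W ⊗[R] V :=
  let τ := β.compr₂ (TensorProduct.mk R W V)
  τ + τ.rotate₃ + τ.rotate₃.rotate₃

variable (β : V →ₗ[R] V →ₗ[R] W)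

theorem cyclicTensor_apply (a b c : V) :
    cyclicTensor β a b c = β a b ⊗ₜ c + β c a ⊗ₜ b + β b c ⊗ₜ a :=
  add_right_comm (β a b ⊗ₜ c) (β b c ⊗ₜ a) (β c a ⊗ₜ b)

theorem cyclicTensor_rotate (a b c : V) : cyclicTensor β b c a = cyclicTensor β a b c := by
  simp only [cyclicTensor_apply]
  abel

variable {β}

theorem cyclicTensor_self_left (hβ : β.IsAlt) (a c : V) :
    cyclicTensor β a a c = 0 := by
  rw [cyclicTensor_apply, hβ.self_eq_zero, ← hβ.neg c a, zero_tmul, zero_add, neg_tmul,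
    add_neg_cancel]

end CyclicTensor

section CyclicTensorField

variable {K V W : Type*} [Field K] [AddCommGroup V] [Module K V] [AddCommGroup W] [Module K W]
  {β : V →ₗ[K] V →ₗ[K] W}

theorem cyclicTensor_eq_zero_of_not_linearIndependent_left (hβ : β.IsAlt) {a b : V}
    (hab : ¬LinearIndependent K ![a, b]) (c : V) : cyclicTensor β a b c = 0 := by
  rw [linearIndependent_fin2, not_and_or, not_not, not_forall] at hab
  rcases hab with hb | ⟨s, hs⟩
  · simp only [Matrix.cons_val_one, Matrix.cons_val_zero] at hb
    rw [hb, map_zero, LinearMap.zero_apply]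
  · simp only [Matrix.cons_val_one, Matrix.cons_val_zero, not_not] at hs
    rw [← hs, map_smul, LinearMap.smul_apply, LinearMap.smul_apply,
      cyclicTensor_self_left hβ, smul_zero]

theorem cyclicTensor_eq_zero_of_not_linearIndependent (hβ : β.IsAlt) {a b c : V}
    (h : ¬LinearIndependent K ![a, b] ∨ ¬LinearIndependent K ![a, c]
      ∨ ¬LinearIndependent K ![b, c]) : cyclicTensor β a b c = 0 := by
  rcases h with hab | hac | hbc
  · exact cyclicTensor_eq_zero_of_not_linearIndependent_left hβ hab c
  · rw [LinearIndependent.pair_symm_iff] at hac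
    rw [← cyclicTensor_rotate, ← cyclicTensor_rotate]
    exact cyclicTensor_eq_zero_of_not_linearIndependent_left hβ hac b
  · rw [← cyclicTensor_rotate]
    exact cyclicTensor_eq_zero_of_not_linearIndependent_left hβ hbc a

end CyclicTensorField

theorem not_linearIndependent_pair_map {R M N : Type*} [Semiring R] [AddCommMonoid M]
    [Module R M] [AddCommMonoid N] [Module R N] (f : M →ₗ[R] N) {x y : M}
    (h : ¬LinearIndependent R ![x, y]) : ¬LinearIndependent R ![f x, f y] := by
  contrapose! h
  refine LinearIndependent.of_comp f ?_
  convert h using 1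
  ext i
  fin_cases i <;> rfl

section LieBracketQuot

variable (K : Type) [Field K] {L : Type} [LieRing L] [LieAlgebra K L]

theorem lie_mem_lieD3 (x : L) {y : L} (hy : y ∈ lieD2 K L) : ⁅x, y⁆ ∈ lieD3 K L := by
  change ⁅x, y⁆ ∈ LieModule.lowerCentralSeries K L L (1 + 1)
  rw [LieModule.lowerCentralSeries_succ]
  exact LieSubmodule.lie_mem_lie (LieSubmodule.mem_top x) hy

noncomputable def lieBracket23 : L →ₗ[K] L →ₗ[K] lieQ23 K L :=
  LinearMap.mk₂ K (lieBr23 K)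
    (fun x x' y => by simp only [lieBr23, ← Submodule.Quotient.mk_add, add_lie]; rfl)
    (fun c x y => by simp only [lieBr23, ← Submodule.Quotient.mk_smul, smul_lie]; rfl)
    (fun x y y' => by simp only [lieBr23, ← Submodule.Quotient.mk_add, lie_add]; rfl)
    (fun c x y => by simp only [lieBr23, ← Submodule.Quotient.mk_smul, lie_smul]; rfl)

theorem lieBracket23_eq_zero_of_mem_right (x : L) {y : L} (hy : y ∈ lieD2 K L) :
    lieBracket23 K x y = 0 :=
  (Submodule.Quotient.mk_eq_zero _).2 (lie_mem_lieD3 K x hy)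

theorem lieBracket23_eq_zero_of_mem_left {x : L} (hx : x ∈ lieD2 K L) (y : L) :
    lieBracket23 K x y = 0 :=
  (Submodule.Quotient.mk_eq_zero _).2 <| by
    change ⁅x, y⁆ ∈ lieD3 K L
    rw [← lie_skew]
    exact neg_mem (lie_mem_lieD3 K y hx)

noncomputable def lieBracketAb : (L ⧸ lieD2 K L) →ₗ[K] (L ⧸ lieD2 K L) →ₗ[K] lieQ23 K L :=
  (lieBracket23 K).liftQ₂ _ _
    (fun _ hx => LinearMap.mem_ker.2 <| LinearMap.ext <| lieBracket23_eq_zero_of_mem_left K hx)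
    (fun _ hy => LinearMap.mem_ker.2 <| LinearMap.ext fun x =>
      lieBracket23_eq_zero_of_mem_right K x hy)

theorem lieBracketAb_isAlt : (lieBracketAb K (L := L)).IsAlt := by
  intro a
  obtain ⟨x, rfl⟩ := Submodule.mkQ_surjective _ a
  refine (Submodule.Quotient.mk_eq_zero _).2 ?_
  change ⁅x, x⁆ ∈ lieD3 K L
  rw [lie_self]
  exact zero_mem _

end LieBracketQuot

theorem gammaL_well_defined (K L : Type) [Field K] [LieRing L] [LieAlgebra K L] :
    ∃ γ : ((L ⧸ lieD2 K L) ⊗[K] ((L ⧸ lieD2 K L) ⊗[K] (L ⧸ lieD2 K L))) →ₗ[K]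
        ((lieQ23 K L) ⊗[K] (L ⧸ lieD2 K L)),
      (∀ x y z : L,
        γ ((lieD2 K L).mkQ x ⊗ₜ ((lieD2 K L).mkQ y ⊗ₜ (lieD2 K L).mkQ z)) =
          lieBr23 K x y ⊗ₜ (lieD2 K L).mkQ z + lieBr23 K z x ⊗ₜ (lieD2 K L).mkQ y
            + lieBr23 K y z ⊗ₜ (lieD2 K L).mkQ x) ∧
      (∀ x y z : L,
        (¬LinearIndependent K ![x, y] ∨ ¬LinearIndependent K ![x, z]
            ∨ ¬LinearIndependent K ![y, z]) →
        γ ((lieD2 K L).mkQ x ⊗ₜ ((lieD2 K L).mkQ y ⊗ₜ (lieD2 K L).mkQ z)) = 0) := by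
  let π := (lieD2 K L).mkQ
  refine ⟨lift (uncurry _ _ _ _ ∘ₗ cyclicTensor (lieBracketAb K)), fun x y z => ?_,
    fun x y z hdep => ?_⟩
  · exact cyclicTensor_apply (lieBracketAb K) (π x) (π y) (π z)
  · have hdep' := hdep.imp (not_linearIndependent_pair_map π) <|
      Or.imp (not_linearIndependent_pair_map π) (not_linearIndependent_pair_map π)
    exact cyclicTensor_eq_zero_of_not_linearIndependent (lieBracketAb_isAlt K) hdep'
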